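/- Let p : ℝ^d → ℝ^m be a polynomial map with p(0) = 0 given by polynomials p₁,…,p_m. The restriction of M_p to T^{≥1}(ℝ^m) is a half-shuffle (Zinbiel) homomorphism, i.e. M_p(x ≻ y) = M_p(x) ≻ M_p(y) for all x, y ∈ T^{≥1}(ℝ^m), and it is the unique half-shuffle homomorphism (T^{≥1}(ℝ^m), ≻) → (T^{≥1}(ℝ^d), ≻) satisfying M_p(i) = φ_d(p_i) for every letter i ∈ {1,…,m}. -/

import Mathlib

noncomputable section

open MeasureTheory

/-- Words in the alphabet `{1,…,d}`. -/
abbrev Word (d : ℕ) := List (Fin d)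

/-- `T(ℝ^d)`: the real vector space with basis the words in `{1,…,d}`. -/
abbrev Tens (d : ℕ) := Word d →₀ ℝ

namespace SigPaper

variable {d m s : ℕ}

/-- The basis word `w` as an element of `T(ℝ^d)`. -/
def wordT (w : Word d) : Tens d := Finsupp.single w 1

/-- The shuffle product of two words. -/
def shuffleWord : Word d → Word d → Tens d
  | [], v => Finsupp.single v 1
  | u, [] => Finsupp.single u 1
  | a :: u, b :: v =>
      Finsupp.mapDomain (fun w => a :: w) (shuffleWord u (b :: v)) +
      Finsupp.mapDomain (fun w => b :: w) (shuffleWord (a :: u) v)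
  termination_by u v => u.length + v.length
  decreasing_by all_goals simp +arith +decide

/-- The shuffle product `⧢` on `T(ℝ^d)`, the bilinear extension of the shuffle of words. -/
def shuffle (x y : Tens d) : Tens d :=
  x.sum fun u a => y.sum fun v b => (a * b) • shuffleWord u v

/-- The operator appending the letter `i` at the end of every word (`T_i^+`). -/
def appendLetter (i : Fin d) (x : Tens d) : Tens d :=
  Finsupp.mapDomain (fun w => w ++ [i]) x

/-- The right half-shuffle of two words: `w ≻ (v∘i) = (w ⧢ v)∘i` (zero if the right word
is empty). -/
def halfShuffleWord (u v : Word d) : Tens d :=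
  match v.getLast? with
  | none => 0
  | some i => appendLetter i (shuffleWord u v.dropLast)

/-- The right half-shuffle `≻`, extended bilinearly. -/
def halfShuffle (x y : Tens d) : Tens d :=
  x.sum fun u a => y.sum fun v b => (a * b) • halfShuffleWord u v

/-- The letter-appending operator `T_i^+`. -/
def Tplus (i : Fin d) : Tens d → Tens d := appendLetter i

/-- `T_i^-` on a word: removes the last letter if it equals `i`, otherwise `0`. -/
def TminusWord (i : Fin d) (w : Word d) : Tens d :=
  match w.getLast? with
  | none => 0
  | some j => if j = i then Finsupp.single w.dropLast 1 else 0

/-- The letter-removing operator `T_i^-`. -/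
def Tminus (i : Fin d) (x : Tens d) : Tens d := x.sum fun w a => a • TminusWord i w

/-- The single-letter word `i` in `T(ℝ^d)`. -/
def letterT (i : Fin d) : Tens d := Finsupp.single [i] 1

/-- Shuffle powers `x^{⧢ n}`. -/
def shufflePow (x : Tens d) : ℕ → Tens d
  | 0 => Finsupp.single [] 1
  | n + 1 => shuffle (shufflePow x n) x

/-- Shuffle product of a list of elements. -/
def shuffleList : List (Tens d) → Tens d
  | [] => Finsupp.single [] 1
  | x :: xs => shuffle x (shuffleList xs)

/-- Image of the monomial `x^t` under `φ_d`: the shuffle product of its letters. -/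
def phiMon (t : Fin d →₀ ℕ) : Tens d :=
  shuffleList ((List.finRange d).map fun i => shufflePow (letterT i) (t i))

/-- The embedding `φ_d : ℝ[x₁,…,x_d] → (T(ℝ^d), ⧢)` sending the monomial
`x_{i₁}⋯x_{i_l}` to `i₁ ⧢ ⋯ ⧢ i_l`. -/
def phi (f : MvPolynomial (Fin d) ℝ) : Tens d :=
  f.support.sum fun t => f.coeff t • phiMon t

/-- A polynomial map `p : ℝ^d → ℝ^m`, given by `m` polynomials in `d` variables. -/
abbrev PolyMap (d m : ℕ) := Fin m → MvPolynomial (Fin d) ℝ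

/-- `k_p^{ij} = φ_d(∂p_i/∂x_j) ∈ T(ℝ^d)`. -/
def kP (p : PolyMap d m) (i : Fin m) (j : Fin d) : Tens d :=
  phi (MvPolynomial.pderiv j (p i))

/-- Auxiliary: `M_p` on reversed words, so that `M_p(e) = e` and
`M_p(w∘i) = Σ_j (M_p(w) ⧢ k_p^{ij})∘j`. -/
def MpRev (p : PolyMap d m) : List (Fin m) → Tens d
  | [] => Finsupp.single [] 1
  | i :: w => ∑ j : Fin d, appendLetter j (shuffle (MpRev p w) (kP p i j))

/-- `M_p` on a word. -/
def MpWord (p : PolyMap d m) (w : Word m) : Tens d := MpRev p w.reverse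

/-- The linear map `M_p : T(ℝ^m) → T(ℝ^d)`. -/
def Mp (p : PolyMap d m) (x : Tens m) : Tens d := x.sum fun w a => a • MpWord p w

/-- `X : [0,L] → ℝ^d` is piecewise continuously differentiable: there is a partition
`0 = t₀ ≤ t₁ ≤ ⋯ ≤ t_n = L` such that `X` is `C¹` on each subinterval. -/
def PiecewiseC1 (X : ℝ → Fin d → ℝ) (L : ℝ) : Prop :=
  ∃ (n : ℕ) (t : Fin (n + 1) → ℝ), Monotone t ∧ t 0 = 0 ∧ t (Fin.last n) = L ∧
    ∀ k : Fin n, ContDiffOn ℝ 1 X (Set.Icc (t k.castSucc) (t k.succ))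

/-- Iterated-integral signature coefficients, on reversed words:
`⟨σ(X|_{[0,t]}), w∘i⟩ = ∫_0^t ⟨σ(X|_{[0,r]}), w⟩ Ẋ^i_r dr`. -/
def sigRev (X : ℝ → Fin d → ℝ) : List (Fin d) → ℝ → ℝ
  | [], _ => 1
  | i :: w, t => ∫ r in (0:ℝ)..t, sigRev X w r * deriv (fun u => X u i) r

/-- `⟨σ(X|_{[0,L]}), w⟩`, the signature coefficient of the word `w`. -/
def sigWord (X : ℝ → Fin d → ℝ) (L : ℝ) (w : Word d) : ℝ := sigRev X w.reverse L

/-- The pairing `⟨σ(X|_{[0,L]}), x⟩` for `x ∈ T(ℝ^d)`. -/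
def sigT (X : ℝ → Fin d → ℝ) (L : ℝ) (x : Tens d) : ℝ :=
  x.sum fun w a => a * sigWord X L w

/-- The transformed path `p(X) : t ↦ p(X(t))`. -/
def pPath (p : PolyMap d m) (X : ℝ → Fin d → ℝ) : ℝ → Fin m → ℝ :=
  fun t i => MvPolynomial.eval (X t) (p i)

/-- The translated polynomial map `p̃(y) = p(y + x₀) − p(x₀)`, satisfying `p̃(0) = 0`. -/
def ptilde (p : PolyMap d m) (x0 : Fin d → ℝ) : PolyMap d m := fun i =>
  MvPolynomial.aeval (fun j => MvPolynomial.X j + MvPolynomial.C (x0 j)) (p i) -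
    MvPolynomial.C (MvPolynomial.eval x0 (p i))

/-- The pairing `⟨exp_∘(L·𝟙), x⟩` for `x ∈ T(ℝ¹)`: the coefficient of the word of
length `n` in `exp_∘(L·𝟙)` is `Lⁿ/n!`. -/
def expPair (L : ℝ) (x : Tens 1) : ℝ :=
  x.sum fun w a => a * (L ^ w.length / (w.length.factorial : ℝ))

/-- The pairing `⟨σ(X) ∘ σ(Y), x⟩` of the concatenation product of two signatures with
`x ∈ T(ℝ^d)`: on a word `w` it is `Σ_{u∘v = w} ⟨σ(X), u⟩·⟨σ(Y), v⟩`. -/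
def concatPair (X Y : ℝ → Fin d → ℝ) (L : ℝ) (x : Tens d) : ℝ :=
  x.sum fun w a =>
    a * ∑ k ∈ Finset.range (w.length + 1), sigWord X L (w.take k) * sigWord Y L (w.drop k)

/-!
Both sides of `M_p(x ≻ y) = M_p(x) ≻ M_p(y)` are bilinear, so it suffices to treat words `u`, `v`.
For `v = v'∘i` one has `u ≻ v = (u ⧢ v')∘i`, and the recursion defining `M_p` turns the identity
into `Σ_j (M_p(u ⧢ v') ⧢ k_p^{ij})∘j = Σ_j (M_p(u) ⧢ (M_p(v') ⧢ k_p^{ij}))∘j`; by associativity of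
`⧢` it follows from `M_p(u ⧢ v') = M_p(u) ⧢ M_p(v')`. Conversely `x ⧢ y = x ≻ y + y ≻ x + ⟨x,e⟩⟨y,e⟩ e`
and `M_p` preserves the coefficient of `e`, so the shuffle identity for `(u, v)` follows from the
half-shuffle identities for `(u, v)` and `(v, u)`: induction on `|u| + |v|` closes the loop.

On a letter, `M_p(i) = Σ_j φ(∂_j p_i)∘j`. Since `φ` intertwines `∂_j` with the derivation `T_j^-`
of `⧢`, and every `x` equals `⟨x,e⟩ e + Σ_j (T_j^- x)∘j`, this is `φ(p_i) - p_i(0) e = φ(p_i)`.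
Uniqueness holds because every word `w∘i` with `w ≠ e` equals `w ≻ i`.
-/

section LinearExtension

variable {α β M : Type*} [AddCommMonoid M] [Module ℝ M]

theorem sum_sum_smul_eq_linearCombination (f : α → β → M) (x : α →₀ ℝ) (y : β →₀ ℝ) :
    (x.sum fun u a => y.sum fun v b => (a * b) • f u v) =
      Finsupp.linearCombination ℝ (fun u => Finsupp.linearCombination ℝ (f u)) x y := by
  simp [Finsupp.linearCombination_apply, Finsupp.sum, Finset.smul_sum, mul_smul,
    LinearMap.sum_apply]

theorem linear_ext_apply {f g : (α →₀ ℝ) →ₗ[ℝ] M}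
    (h : ∀ u, f (Finsupp.single u 1) = g (Finsupp.single u 1)) (x : α →₀ ℝ) : f x = g x := by
  congr 1
  ext u
  exact h u

theorem bilinear_ext_apply {B₁ B₂ : (α →₀ ℝ) →ₗ[ℝ] (β →₀ ℝ) →ₗ[ℝ] M}
    (h : ∀ u v, B₁ (Finsupp.single u 1) (Finsupp.single v 1) =
      B₂ (Finsupp.single u 1) (Finsupp.single v 1))
    (x : α →₀ ℝ) (y : β →₀ ℝ) : B₁ x y = B₂ x y := by
  congr 2
  ext u v
  exact h u v

theorem linearMap_apply_eq_of_apply_eq_zero {f g : (α →₀ ℝ) →ₗ[ℝ] M} (a : α)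
    (h : ∀ w, w ≠ a → f (Finsupp.single w 1) = g (Finsupp.single w 1))
    {x : α →₀ ℝ} (hx : x a = 0) : f x = g x := by
  have hx' : x ∈ Finsupp.supported ℝ ℝ {a}ᶜ := fun w hw => by
    rintro rfl
    exact Finsupp.mem_support_iff.mp hw hx
  rw [Finsupp.supported_eq_span_single] at hx'
  exact LinearMap.eqOn_span (by rintro _ ⟨w, hw, rfl⟩; exact h w hw) hx'

end LinearExtension

local infixl:70 " ⧢ " => shuffle
local infixl:70 " ≻ " => halfShuffle

section Shuffle

@[simp] lemma shuffleWord_nil_left (v : Word d) : shuffleWord [] v = Finsupp.single v 1 := by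
  cases v <;> simp [shuffleWord]

@[simp] lemma shuffleWord_nil_right (u : Word d) : shuffleWord u [] = Finsupp.single u 1 := by
  cases u <;> simp [shuffleWord]

lemma shuffleWord_cons_cons (a b : Fin d) (u v : Word d) :
    shuffleWord (a :: u) (b :: v) =
      Finsupp.mapDomain (a :: ·) (shuffleWord u (b :: v)) +
        Finsupp.mapDomain (b :: ·) (shuffleWord (a :: u) v) := by
  rw [shuffleWord]

lemma shuffleWord_comm : ∀ u v : Word d, shuffleWord u v = shuffleWord v u
  | [], v => by rw [shuffleWord_nil_left, shuffleWord_nil_right]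
  | u, [] => by rw [shuffleWord_nil_left, shuffleWord_nil_right]
  | a :: u, b :: v => by
      rw [shuffleWord_cons_cons a b, shuffleWord_cons_cons b a, shuffleWord_comm u,
        shuffleWord_comm (a :: u), add_comm]
  termination_by u v => u.length + v.length

def shuffleₗ : Tens d →ₗ[ℝ] Tens d →ₗ[ℝ] Tens d :=
  Finsupp.linearCombination ℝ fun u => Finsupp.linearCombination ℝ (shuffleWord u)

@[simp] lemma shuffleₗ_apply (x y : Tens d) : shuffleₗ x y = x ⧢ y :=
  (sum_sum_smul_eq_linearCombination shuffleWord x y).symm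

@[simp] lemma shuffle_zero_left (y : Tens d) : 0 ⧢ y = 0 := by
  simp [← shuffleₗ_apply]

@[simp] lemma shuffle_zero_right (x : Tens d) : x ⧢ 0 = 0 := by
  simp [← shuffleₗ_apply]

lemma shuffle_add_left (x x' y : Tens d) : (x + x') ⧢ y = x ⧢ y + x' ⧢ y := by
  simp [← shuffleₗ_apply]

lemma shuffle_add_right (x y y' : Tens d) : x ⧢ (y + y') = x ⧢ y + x ⧢ y' := by
  simp [← shuffleₗ_apply]

lemma shuffle_smul_left (c : ℝ) (x y : Tens d) : (c • x) ⧢ y = c • (x ⧢ y) := by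
  simp [← shuffleₗ_apply]

lemma shuffle_smul_right (c : ℝ) (x y : Tens d) : x ⧢ (c • y) = c • (x ⧢ y) := by
  simp [← shuffleₗ_apply]

@[simp] lemma shuffle_single_single (u v : Word d) (a b : ℝ) :
    Finsupp.single u a ⧢ Finsupp.single v b = (a * b) • shuffleWord u v := by
  simp [← shuffleₗ_apply, shuffleₗ, mul_smul]

lemma shuffle_comm (x y : Tens d) : x ⧢ y = y ⧢ x := by
  simpa using bilinear_ext_apply (B₁ := shuffleₗ) (B₂ := shuffleₗ.flip)
    (fun u v => by simp [shuffleWord_comm u v]) x y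

@[simp] lemma single_nil_shuffle (a : ℝ) (y : Tens d) : Finsupp.single [] a ⧢ y = a • y := by
  have h : Finsupp.single [] 1 ⧢ y = y := by
    simpa using linear_ext_apply (f := shuffleₗ (Finsupp.single [] 1)) (g := LinearMap.id)
      (fun v => by simp [shuffleWord_nil_left]) y
  rw [← Finsupp.smul_single_one, shuffle_smul_left, h]

@[simp] lemma shuffle_single_nil (a : ℝ) (x : Tens d) : x ⧢ Finsupp.single [] a = a • x := by
  rw [shuffle_comm, single_nil_shuffle]

def consₗ (a : Fin d) : Tens d →ₗ[ℝ] Tens d := Finsupp.lmapDomain ℝ ℝ (a :: ·)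

lemma consₗ_apply (a : Fin d) (x : Tens d) : consₗ a x = Finsupp.mapDomain (a :: ·) x := rfl

lemma consₗ_shuffle_consₗ (a b : Fin d) (x y : Tens d) :
    consₗ a x ⧢ consₗ b y = consₗ a (x ⧢ consₗ b y) + consₗ b (consₗ a x ⧢ y) := by
  simpa [consₗ_apply, shuffleWord_cons_cons] using
    bilinear_ext_apply (B₁ := shuffleₗ.compl₁₂ (consₗ a) (consₗ b))
      (B₂ := (shuffleₗ.compl₂ (consₗ b)).compr₂ (consₗ a) + (shuffleₗ ∘ₗ consₗ a).compr₂ (consₗ b))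
      (fun u v => by simp [consₗ_apply, shuffleWord_cons_cons]) x y

lemma single_cons (a : Fin d) (w : Word d) :
    Finsupp.single (a :: w) 1 = consₗ a (Finsupp.single w 1) := by
  simp [consₗ_apply]

lemma shuffle_assoc_single : ∀ u v w : Word d,
    shuffleWord u v ⧢ Finsupp.single w 1 = Finsupp.single u 1 ⧢ shuffleWord v w
  | [], v, w => by simp [shuffleWord_nil_left]
  | a :: u, [], w => by simp [shuffleWord_nil_left, shuffleWord_nil_right]
  | a :: u, b :: v, [] => by simp [shuffleWord_nil_right]
  | a :: u, b :: v, c :: w => by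
      have IH1 := shuffle_assoc_single u (b :: v) (c :: w)
      have IH2 := shuffle_assoc_single (a :: u) v (c :: w)
      have IH3 := shuffle_assoc_single (a :: u) (b :: v) w
      simp only [shuffleWord_cons_cons, single_cons, ← consₗ_apply, shuffle_add_left,
        shuffle_add_right, consₗ_shuffle_consₗ] at IH1 IH2 IH3 ⊢
      rw [IH1, IH2, ← IH3]
      simp only [map_add]
      abel
  termination_by u v w => u.length + v.length + w.length

lemma shuffle_assoc (x y z : Tens d) : x ⧢ y ⧢ z = x ⧢ (y ⧢ z) := by
  have h : (shuffleₗ.compr₂ shuffleₗ : Tens d →ₗ[ℝ] Tens d →ₗ[ℝ] Tens d →ₗ[ℝ] Tens d) =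
      (LinearMap.llcomp ℝ _ _ _).compl₁₂ shuffleₗ shuffleₗ := by
    ext u v w : 6
    simpa using shuffle_assoc_single u v w
  simpa using congr($h x y z)

end Shuffle

section HalfShuffle

def appendLetterₗ (i : Fin d) : Tens d →ₗ[ℝ] Tens d := Finsupp.lmapDomain ℝ ℝ (· ++ [i])

@[simp] lemma appendLetterₗ_apply (i : Fin d) (x : Tens d) :
    appendLetterₗ i x = appendLetter i x := rfl

@[simp] lemma appendLetter_single (i : Fin d) (w : Word d) (a : ℝ) :
    appendLetter i (Finsupp.single w a) = Finsupp.single (w ++ [i]) a :=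
  Finsupp.mapDomain_single

lemma appendLetter_consₗ (i c : Fin d) (x : Tens d) :
    appendLetter i (consₗ c x) = consₗ c (appendLetter i x) := by
  simp only [appendLetter, consₗ_apply, ← Finsupp.mapDomain_comp]
  rfl

@[simp] lemma appendLetter_zero (i : Fin d) : appendLetter i (0 : Tens d) = 0 :=
  Finsupp.mapDomain_zero

@[simp] lemma appendLetter_apply_nil (i : Fin d) (x : Tens d) : appendLetter i x [] = 0 :=
  Finsupp.mapDomain_of_notMem_range _ _ (by simp)

lemma appendLetter_add (i : Fin d) (x y : Tens d) :
    appendLetter i (x + y) = appendLetter i x + appendLetter i y :=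
  Finsupp.mapDomain_add

lemma shuffleWord_append_singleton : ∀ (u v : Word d) (a b : Fin d),
    shuffleWord (u ++ [a]) (v ++ [b]) =
      appendLetter b (shuffleWord (u ++ [a]) v) + appendLetter a (shuffleWord u (v ++ [b]))
  | [], [], a, b => by simp [shuffleWord_cons_cons]
  | [], c :: v, a, b => by
      have IH := shuffleWord_append_singleton [] v a b
      simp only [List.nil_append, List.cons_append] at IH ⊢
      simp only [shuffleWord_cons_cons, IH, shuffleWord_nil_left, single_cons, ← consₗ_apply,
        map_add, appendLetter_add, appendLetter_consₗ, appendLetter_single]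
      abel
  | c :: u, [], a, b => by
      have IH := shuffleWord_append_singleton u [] a b
      simp only [List.nil_append, List.cons_append] at IH ⊢
      simp only [shuffleWord_cons_cons, IH, shuffleWord_nil_right, single_cons, ← consₗ_apply,
        map_add, appendLetter_add, appendLetter_consₗ, appendLetter_single]
      abel
  | c :: u, e :: v, a, b => by
      have IH1 := shuffleWord_append_singleton u (e :: v) a b
      have IH2 := shuffleWord_append_singleton (c :: u) v a b
      simp only [List.cons_append] at IH1 IH2 ⊢
      simp only [shuffleWord_cons_cons, IH1, IH2, ← consₗ_apply, map_add, appendLetter_add,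
        appendLetter_consₗ]
      abel
  termination_by u v => u.length + v.length

def halfShuffleₗ : Tens d →ₗ[ℝ] Tens d →ₗ[ℝ] Tens d :=
  Finsupp.linearCombination ℝ fun u => Finsupp.linearCombination ℝ (halfShuffleWord u)

@[simp] lemma halfShuffleₗ_apply (x y : Tens d) : halfShuffleₗ x y = x ≻ y :=
  (sum_sum_smul_eq_linearCombination halfShuffleWord x y).symm

@[simp] lemma halfShuffle_single_single (u v : Word d) (a b : ℝ) :
    Finsupp.single u a ≻ Finsupp.single v b = (a * b) • halfShuffleWord u v := by
  simp [← halfShuffleₗ_apply, halfShuffleₗ, mul_smul]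

@[simp] lemma halfShuffleWord_nil_right (u : Word d) : halfShuffleWord u [] = 0 := rfl

@[simp] lemma halfShuffleWord_append_singleton (u v : Word d) (i : Fin d) :
    halfShuffleWord u (v ++ [i]) = appendLetter i (shuffleWord u v) := by
  simp [halfShuffleWord]

lemma halfShuffle_sum_right {ι : Type*} (s : Finset ι) (x : Tens d) (f : ι → Tens d) :
    x ≻ ∑ i ∈ s, f i = ∑ i ∈ s, x ≻ f i := by
  simp [← halfShuffleₗ_apply]

lemma halfShuffle_single_nil (x : Tens d) (a : ℝ) : x ≻ Finsupp.single [] a = 0 := by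
  simpa using linear_ext_apply (f := halfShuffleₗ.flip (Finsupp.single [] a)) (g := 0)
    (fun u => by simp) x

lemma halfShuffle_appendLetter (x y : Tens d) (i : Fin d) :
    x ≻ appendLetter i y = appendLetter i (x ⧢ y) := by
  simpa using bilinear_ext_apply (B₁ := halfShuffleₗ.compl₂ (appendLetterₗ i))
    (B₂ := shuffleₗ.compr₂ (appendLetterₗ i)) (fun u v => by simp [appendLetter]) x y

lemma shuffleWord_eq_halfShuffleWord_add (u v : Word d) :
    shuffleWord u v = halfShuffleWord u v + halfShuffleWord v u +
      (Finsupp.single u (1 : ℝ) [] * Finsupp.single v (1 : ℝ) []) • Finsupp.single [] 1 := by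
  rcases List.eq_nil_or_concat' u with rfl | ⟨u, a, rfl⟩ <;>
    rcases List.eq_nil_or_concat' v with rfl | ⟨v, b, rfl⟩
  · simp
  · simp
  · simp
  · simp [shuffleWord_append_singleton, shuffleWord_comm (v ++ [b])]

lemma shuffle_eq_halfShuffle_add (x y : Tens d) :
    x ⧢ y = x ≻ y + y ≻ x + (x [] * y []) • Finsupp.single [] 1 := by
  have h := bilinear_ext_apply (B₁ := shuffleₗ)
    (B₂ := halfShuffleₗ + halfShuffleₗ.flip + (Finsupp.lapply []).smulRight
      ((Finsupp.lapply []).smulRight (Finsupp.single [] 1)))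
    (fun u v => by simpa [mul_smul, -Finsupp.single_mul] using
      shuffleWord_eq_halfShuffleWord_add u v) x y
  simp only [LinearMap.add_apply] at h
  simpa [mul_smul, -Finsupp.single_mul] using h

end HalfShuffle

section Tminus

def Tminusₗ (j : Fin d) : Tens d →ₗ[ℝ] Tens d := Finsupp.linearCombination ℝ (TminusWord j)

@[simp] lemma Tminusₗ_apply (j : Fin d) (x : Tens d) : Tminusₗ j x = Tminus j x :=
  Finsupp.linearCombination_apply ℝ x

lemma Tminus_add (j : Fin d) (x y : Tens d) : Tminus j (x + y) = Tminus j x + Tminus j y := by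
  simp [← Tminusₗ_apply]

lemma Tminus_smul (j : Fin d) (c : ℝ) (x : Tens d) : Tminus j (c • x) = c • Tminus j x := by
  simp [← Tminusₗ_apply]

@[simp] lemma Tminus_single (j : Fin d) (w : Word d) (a : ℝ) :
    Tminus j (Finsupp.single w a) = a • TminusWord j w := by
  simp [← Tminusₗ_apply, Tminusₗ]

@[simp] lemma TminusWord_nil (j : Fin d) : TminusWord j ([] : Word d) = 0 := rfl

@[simp] lemma TminusWord_append_singleton (j i : Fin d) (w : Word d) :
    TminusWord j (w ++ [i]) = if i = j then Finsupp.single w 1 else 0 := by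
  simp [TminusWord]

lemma Tminus_appendLetter (j i : Fin d) (x : Tens d) :
    Tminus j (appendLetter i x) = if i = j then x else 0 := by
  by_cases h : i = j
  · simpa [h] using linear_ext_apply (f := Tminusₗ j ∘ₗ appendLetterₗ i) (g := LinearMap.id)
      (fun w => by simp [h]) x
  · simpa [h] using linear_ext_apply (f := Tminusₗ j ∘ₗ appendLetterₗ i) (g := 0)
      (fun w => by simp [h]) x

lemma apply_nil_smul_add_sum_appendLetter_Tminus (x : Tens d) :
    x [] • Finsupp.single [] 1 + ∑ j, appendLetter j (Tminus j x) = x := by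
  have h := linear_ext_apply (f := (Finsupp.lapply []).smulRight (Finsupp.single [] 1) +
    ∑ j, appendLetterₗ j ∘ₗ Tminusₗ j) (g := LinearMap.id) (fun w => by
      rcases List.eq_nil_or_concat' w with rfl | ⟨w, i, rfl⟩
      · simp [LinearMap.sum_apply]
      · simp [LinearMap.sum_apply, apply_ite]) x
  simpa [LinearMap.sum_apply] using h

lemma Tminus_shuffleWord (j : Fin d) (u v : Word d) :
    Tminus j (shuffleWord u v) =
      Tminus j (Finsupp.single u 1) ⧢ Finsupp.single v 1 +
        Finsupp.single u 1 ⧢ Tminus j (Finsupp.single v 1) := by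
  rcases List.eq_nil_or_concat' u with rfl | ⟨u, a, rfl⟩
  · simp
  rcases List.eq_nil_or_concat' v with rfl | ⟨v, b, rfl⟩
  · simp
  rw [shuffleWord_append_singleton, Tminus_add, Tminus_appendLetter, Tminus_appendLetter]
  by_cases ha : a = j <;> by_cases hb : b = j <;> simp [ha, hb, add_comm]

lemma Tminus_shuffle (j : Fin d) (x y : Tens d) :
    Tminus j (x ⧢ y) = Tminus j x ⧢ y + x ⧢ Tminus j y := by
  simpa using bilinear_ext_apply (B₁ := shuffleₗ.compr₂ (Tminusₗ j))
    (B₂ := shuffleₗ ∘ₗ Tminusₗ j + shuffleₗ.compl₂ (Tminusₗ j))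
    (fun u v => by simpa using Tminus_shuffleWord j u v) x y

end Tminus

section Mp

variable (p : PolyMap d m)

def Mpₗ : Tens m →ₗ[ℝ] Tens d := Finsupp.linearCombination ℝ (MpWord p)

@[simp] lemma Mpₗ_apply (x : Tens m) : Mpₗ p x = Mp p x :=
  Finsupp.linearCombination_apply ℝ x

@[simp] lemma Mp_zero : Mp p 0 = 0 := by
  simp [← Mpₗ_apply]

lemma Mp_add (x y : Tens m) : Mp p (x + y) = Mp p x + Mp p y := by
  simp [← Mpₗ_apply]

lemma Mp_smul (c : ℝ) (x : Tens m) : Mp p (c • x) = c • Mp p x := by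
  simp [← Mpₗ_apply]

@[simp] lemma Mp_single (w : Word m) (a : ℝ) : Mp p (Finsupp.single w a) = a • MpWord p w := by
  simp [← Mpₗ_apply, Mpₗ]

@[simp] lemma MpWord_nil : MpWord p [] = Finsupp.single [] 1 := rfl

@[simp] lemma MpWord_append_singleton (w : Word m) (i : Fin m) :
    MpWord p (w ++ [i]) = ∑ j, appendLetter j (MpWord p w ⧢ kP p i j) := by
  simp [MpWord, MpRev]

lemma Mp_appendLetter (i : Fin m) (x : Tens m) :
    Mp p (appendLetter i x) = ∑ j, appendLetter j (Mp p x ⧢ kP p i j) := by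
  simpa [LinearMap.sum_apply] using linear_ext_apply (f := Mpₗ p ∘ₗ appendLetterₗ i)
    (g := ∑ j, appendLetterₗ j ∘ₗ shuffleₗ.flip (kP p i j) ∘ₗ Mpₗ p)
    (fun w => by simp [LinearMap.sum_apply]) x

lemma Mp_apply_nil (x : Tens m) : Mp p x [] = x [] := by
  simpa using linear_ext_apply (f := Finsupp.lapply [] ∘ₗ Mpₗ p) (g := Finsupp.lapply [])
    (fun w => by rcases List.eq_nil_or_concat' w with rfl | ⟨w, i, rfl⟩ <;> simp) x

lemma Mp_halfShuffle_appendLetter_of_shuffle {x y : Tens m}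
    (h : Mp p (x ⧢ y) = Mp p x ⧢ Mp p y) (i : Fin m) :
    Mp p (x ≻ appendLetter i y) = Mp p x ≻ Mp p (appendLetter i y) := by
  rw [halfShuffle_appendLetter, Mp_appendLetter, h, Mp_appendLetter, halfShuffle_sum_right]
  simp [halfShuffle_appendLetter, shuffle_assoc]

lemma Mp_halfShuffle_single_of_shuffle (u v : Word m)
    (h : ∀ v' i, v = v' ++ [i] → Mp p (Finsupp.single u 1 ⧢ Finsupp.single v' 1) =
      Mp p (Finsupp.single u 1) ⧢ Mp p (Finsupp.single v' 1)) :
    Mp p (Finsupp.single u 1 ≻ Finsupp.single v 1) =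
      Mp p (Finsupp.single u 1) ≻ Mp p (Finsupp.single v 1) := by
  rcases List.eq_nil_or_concat' v with rfl | ⟨v, i, rfl⟩
  · simp [halfShuffle_single_nil]
  · rw [← appendLetter_single]
    exact Mp_halfShuffle_appendLetter_of_shuffle p (h v i rfl) i

theorem Mp_shuffle_single (u v : Word m) :
    Mp p (Finsupp.single u 1 ⧢ Finsupp.single v 1) =
      Mp p (Finsupp.single u 1) ⧢ Mp p (Finsupp.single v 1) := by
  have huv := Mp_halfShuffle_single_of_shuffle p u v fun v' i hv => by
    subst hv
    exact Mp_shuffle_single u v'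
  have hvu := Mp_halfShuffle_single_of_shuffle p v u fun u' i hu => by
    subst hu
    exact Mp_shuffle_single v u'
  rw [shuffle_eq_halfShuffle_add (Finsupp.single u 1), shuffle_eq_halfShuffle_add (Mp p _),
    Mp_add, Mp_add, huv, hvu, Mp_smul, Mp_apply_nil, Mp_apply_nil, Mp_single p [], MpWord_nil,
    one_smul]
termination_by u.length + v.length

theorem Mp_halfShuffle (x y : Tens m) : Mp p (x ≻ y) = Mp p x ≻ Mp p y := by
  simpa using bilinear_ext_apply (B₁ := halfShuffleₗ.compr₂ (Mpₗ p))
    (B₂ := halfShuffleₗ.compl₁₂ (Mpₗ p) (Mpₗ p))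
    (fun u v => by simpa using Mp_halfShuffle_single_of_shuffle p u v fun v' _ _ =>
      Mp_shuffle_single p u v') x y

end Mp

section Phi

lemma halfShuffle_apply_nil (x y : Tens d) : (x ≻ y) [] = 0 := by
  simpa using bilinear_ext_apply (B₁ := halfShuffleₗ.compr₂ (Finsupp.lapply []))
    (B₂ := 0) (fun u v => by
      rcases List.eq_nil_or_concat' v with rfl | ⟨v, i, rfl⟩ <;> simp) x y

lemma shuffle_apply_nil (x y : Tens d) : (x ⧢ y) [] = x [] * y [] := by
  simp [shuffle_eq_halfShuffle_add x y, halfShuffle_apply_nil]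

lemma shufflePow_apply_nil (x : Tens d) (n : ℕ) : shufflePow x n [] = x [] ^ n := by
  induction n with
  | zero => simp [shufflePow]
  | succ n ih => rw [shufflePow, shuffle_apply_nil, ih, pow_succ]

lemma shuffleList_apply_nil (l : List (Tens d)) :
    shuffleList l [] = (l.map fun x => x []).prod := by
  induction l with
  | nil => simp [shuffleList]
  | cons x l ih => rw [shuffleList, shuffle_apply_nil, ih, List.map_cons, List.prod_cons]

lemma phiMon_apply_nil (t : Fin d →₀ ℕ) : phiMon t [] = ∏ i, (0 : ℝ) ^ t i := by
  rw [phiMon, shuffleList_apply_nil, List.map_map, Fin.prod_univ_def]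
  simp [Function.comp_def, shufflePow_apply_nil, letterT]

lemma phi_eq_sum (f : MvPolynomial (Fin d) ℝ) :
    phi f = ∑ t ∈ f.support, MvPolynomial.coeff t f • phiMon t := rfl

lemma phi_apply_nil (f : MvPolynomial (Fin d) ℝ) : phi f [] = MvPolynomial.eval 0 f := by
  rw [MvPolynomial.eval_eq']
  simp [phi_eq_sum, phiMon_apply_nil, Finsupp.finsetSum_apply]

lemma phi_eq_linearCombination (f : MvPolynomial (Fin d) ℝ) :
    phi f = Finsupp.linearCombination ℝ phiMon (AddMonoidAlgebra.coeff f) :=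
  (Finsupp.linearCombination_apply ℝ _).symm

lemma phi_add (f g : MvPolynomial (Fin d) ℝ) : phi (f + g) = phi f + phi g := by
  simp only [phi_eq_linearCombination, AddMonoidAlgebra.coeff_add, map_add]

lemma phi_monomial (t : Fin d →₀ ℕ) (c : ℝ) : phi (MvPolynomial.monomial t c) = c • phiMon t := by
  rw [phi_eq_linearCombination]
  exact Finsupp.linearCombination_single ℝ c t

lemma shufflePow_succ (x : Tens d) (n : ℕ) : shufflePow x (n + 1) = shufflePow x n ⧢ x := rfl

lemma Tminus_shufflePow (j : Fin d) (x : Tens d) (n : ℕ) :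
    Tminus j (shufflePow x n) = (n : ℝ) • (shufflePow x (n - 1) ⧢ Tminus j x) := by
  induction n with
  | zero => simp [shufflePow]
  | succ n ih =>
    rw [shufflePow_succ, Tminus_shuffle, ih]
    rcases n with _ | n
    · simp [shufflePow]
    · rw [shuffle_smul_left, shuffle_assoc, shuffle_comm (Tminus j x) x, ← shuffle_assoc,
        Nat.add_sub_cancel, ← shufflePow_succ, Nat.add_sub_cancel]
      push_cast
      module

lemma Tminus_letterT (j i : Fin d) :
    Tminus j (letterT i) = if i = j then Finsupp.single [] 1 else 0 := by
  simp [letterT, TminusWord]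

lemma Tminus_shuffleList_map {ι : Type*} [DecidableEq ι] (j : Fin d) (F G : ι → Tens d) (k : ι)
    (c : ℝ) (hF : ∀ i, i ≠ k → Tminus j (F i) = 0) (hG : ∀ i, i ≠ k → G i = F i)
    (hk : Tminus j (F k) = c • G k) {l : List ι} (hl : l.Nodup) :
    Tminus j (shuffleList (l.map F)) = (if k ∈ l then c else 0) • shuffleList (l.map G) := by
  induction l with
  | nil => simp [shuffleList]
  | cons i l ih =>
    obtain ⟨hil, hl⟩ := List.nodup_cons.mp hl
    rw [List.map_cons, List.map_cons, shuffleList, shuffleList, Tminus_shuffle, ih hl]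
    by_cases hik : i = k
    · subst hik
      have hFG : l.map F = l.map G :=
        List.map_congr_left fun i' hi' => (hG i' (ne_of_mem_of_not_mem hi' hil)).symm
      simp [hil, hk, hFG, shuffle_smul_left]
    · simp only [List.mem_cons, Ne.symm hik, false_or]
      split_ifs <;> simp [hF i hik, hG i hik, shuffle_smul_right]

lemma Tminus_phiMon (j : Fin d) (t : Fin d →₀ ℕ) :
    Tminus j (phiMon t) = (t j : ℝ) • phiMon (t - Finsupp.single j 1) := by
  have h := Tminus_shuffleList_map j (fun i => shufflePow (letterT i) (t i))
    (fun i => shufflePow (letterT i) ((t - Finsupp.single j 1 : Fin d →₀ ℕ) i)) j (t j)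
    (fun i hi => by simp [Tminus_shufflePow, Tminus_letterT, hi])
    (fun i hi => by simp [Ne.symm hi])
    (by simp [Tminus_shufflePow, Tminus_letterT]) (List.nodup_finRange d)
  simpa [phiMon] using h

lemma phi_pderiv (j : Fin d) (f : MvPolynomial (Fin d) ℝ) :
    phi (MvPolynomial.pderiv j f) = Tminus j (phi f) := by
  induction f using MvPolynomial.induction_on' with
  | monomial t c =>
    rw [MvPolynomial.pderiv_monomial, phi_monomial, phi_monomial, Tminus_smul, Tminus_phiMon,
      smul_smul]
  | add f g hf hg => rw [map_add, phi_add, phi_add, Tminus_add, hf, hg]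

end Phi

lemma Mp_wordT_singleton (p : PolyMap d m) (i : Fin m) :
    Mp p (wordT [i]) = phi (p i) - MvPolynomial.eval 0 (p i) • Finsupp.single [] 1 := by
  rw [eq_sub_iff_add_eq', ← phi_apply_nil]
  conv_rhs => rw [← apply_nil_smul_add_sum_appendLetter_Tminus (phi (p i))]
  simp [wordT, MpWord, MpRev, kP, phi_pderiv]

lemma single_append_singleton (w : Word d) (i : Fin d) :
    Finsupp.single (w ++ [i]) 1 = Finsupp.single w 1 ≻ Finsupp.single [i] 1 := by
  simpa using (halfShuffleWord_append_singleton w [] i).symm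

theorem halfShuffle_hom_ext {N₁ N₂ : Tens m →ₗ[ℝ] Tens d}
    (hN₁ : ∀ x y : Tens m, x [] = 0 → y [] = 0 → N₁ (x ≻ y) = N₁ x ≻ N₁ y)
    (hN₂ : ∀ x y : Tens m, x [] = 0 → y [] = 0 → N₂ (x ≻ y) = N₂ x ≻ N₂ y)
    (h : ∀ i, N₁ (wordT [i]) = N₂ (wordT [i])) {x : Tens m} (hx : x [] = 0) : N₁ x = N₂ x := by
  refine linearMap_apply_eq_of_apply_eq_zero [] (fun w => ?_) hx
  induction w using List.reverseRecOn with
  | nil => exact fun hne => absurd rfl hne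
  | append_singleton w i ih =>
    intro _
    rcases eq_or_ne w [] with rfl | hw
    · exact h i
    have hw₀ : Finsupp.single w (1 : ℝ) [] = 0 := Finsupp.single_eq_of_ne hw.symm
    have hi₀ : Finsupp.single [i] (1 : ℝ) [] = 0 := Finsupp.single_eq_of_ne (by simp)
    rw [single_append_singleton, hN₁ _ _ hw₀ hi₀, hN₂ _ _ hw₀ hi₀, ih hw]
    exact congrArg _ (h i)

/-- For a polynomial map `p` with `p(0) = 0`, the restriction of `M_p` to
`T^{≥1}(ℝ^m)` is a half-shuffle (Zinbiel) homomorphism with `M_p(i) = φ_d(p_i)`, and it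
is the unique such half-shuffle homomorphism. -/
theorem Mp_halfShuffle_hom (d m : ℕ) (p : PolyMap d m)
    (hp : ∀ i, MvPolynomial.eval (0 : Fin d → ℝ) (p i) = 0) :
    (∀ x y : Tens m, x ([] : Word m) = 0 → y ([] : Word m) = 0 →
        Mp p (halfShuffle x y) = halfShuffle (Mp p x) (Mp p y)) ∧
    (∀ i : Fin m, Mp p (wordT [i]) = phi (p i)) ∧
    (∀ N : Tens m →ₗ[ℝ] Tens d,
        (∀ x y : Tens m, x ([] : Word m) = 0 → y ([] : Word m) = 0 →
          N (halfShuffle x y) = halfShuffle (N x) (N y)) →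
        (∀ i : Fin m, N (wordT [i]) = phi (p i)) →
        ∀ x : Tens m, x ([] : Word m) = 0 → N x = Mp p x) := by
  have hMp_letter : ∀ i, Mp p (wordT [i]) = phi (p i) := fun i => by
    rw [Mp_wordT_singleton, hp, zero_smul, sub_zero]
  refine ⟨fun x y _ _ => Mp_halfShuffle p x y, hMp_letter, fun N hN hN_letter x hx => ?_⟩
  simpa using halfShuffle_hom_ext (N₂ := Mpₗ p) hN
    (fun x y _ _ => by simpa using Mp_halfShuffle p x y) (fun i => by simpa [hN_letter] using (hMp_letter i).symm) hx

end SigPaper
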